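/- Let S be a left cancellative monoid and R a ring with an S-grading with support of size d, where the neutral component R_e is nil of bounded index s. Then R is nil of bounded index with nd_nil(R) ≤ 2sd²·(d^{2d} − 1)/(d − 1), assuming R_e is f-commutative. -/

import Mathlib

/-- Product `a * l₀ * l₁ * ⋯` of a nonempty list of ring elements. -/
def mulList {R : Type*} [Mul R] (a : R) (l : List R) : R := l.foldl (· * ·) a

/-- `pw a n` is `aⁿ` for `n ≥ 1` (junk value `0` at `n = 0`). -/
def pw {R : Type*} [Mul R] [Zero R] (a : R) : ℕ → R
  | 0 => 0
  | 1 => a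
  | n + 2 => pw a (n + 1) * a

/-- Product of `n` elements given by `f` (junk `0` when `n = 0`). -/
def finProd {R : Type*} [Mul R] [Zero R] : {n : ℕ} → (Fin n → R) → R
  | 0, _ => 0
  | n + 1, f => mulList (f 0) (List.ofFn fun i : Fin n => f i.succ)

/-- `R ^ n = 0`: every product of `n` elements of `R` vanishes. -/
def PowZero (R : Type*) [Mul R] [Zero R] (n : ℕ) : Prop :=
  ∀ (a : R) (l : List R), l.length + 1 = n → mulList a l = 0

/-- `T ^ n = 0` for a subset `T` of a ring. -/
def PowZeroOn {R : Type*} [Mul R] [Zero R] (T : Set R) (n : ℕ) : Prop :=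
  ∀ (a : R) (l : List R), a ∈ T → (∀ x ∈ l, x ∈ T) → l.length + 1 = n → mulList a l = 0

/-- `a` is nilpotent: `aⁿ = 0` for some `n ≥ 1`. -/
def IsNilE {R : Type*} [Mul R] [Zero R] (a : R) : Prop := ∃ n, 1 ≤ n ∧ pw a n = 0

/-- A nil ring: every element is nilpotent. -/
def IsNilRing (R : Type*) [Mul R] [Zero R] : Prop := ∀ a : R, IsNilE a

/-- An `S`-grading of the ring `R`: a direct sum decomposition into additive
subgroups with `R_g R_h ⊆ R_{gh}`. -/
structure IsGrading {S R : Type*} [Monoid S] [NonUnitalRing R] [DecidableEq S]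
    (A : S → AddSubgroup R) : Prop where
  mul_mem : ∀ {g h : S} {x y : R}, x ∈ A g → y ∈ A h → x * y ∈ A (g * h)
  isInternal : DirectSum.IsInternal A

/-- Grading by an additively written monoid. -/
structure IsAddGrading {S R : Type*} [AddMonoid S] [NonUnitalRing R] [DecidableEq S]
    (A : S → AddSubgroup R) : Prop where
  mul_mem : ∀ {g h : S} {x y : R}, x ∈ A g → y ∈ A h → x * y ∈ A (g + h)
  isInternal : DirectSum.IsInternal A

/-- The subset `T` of a ring is `f`-commutative: there are a semigroup `G` acting on it
from the left and a map `f` with `a*b = f(a,b)·(b*a)`. -/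
def IsFCommutativeOn {R : Type*} [Mul R] (T : Set R) : Prop :=
  ∃ (G : Type) (_ : Semigroup G) (act : G → R → R),
    (∀ l m : G, ∀ x : R, x ∈ T → act (l * m) x = act l (act m x)) ∧
    (∀ l : G, ∀ x : R, x ∈ T → act l x ∈ T) ∧
    (∀ l : G, ∀ x y : R, x ∈ T → y ∈ T → act l (x * y) = act l x * y) ∧
    ∃ f : R → R → G, ∀ a b : R, a ∈ T → b ∈ T → a * b = act (f a b) (b * a)

/-- The ring `R` is `f`-commutative. -/
def IsFCommutative (R : Type*) [Mul R] : Prop :=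
  ∃ (G : Type) (_ : Semigroup G) (act : G → R → R),
    (∀ l m : G, ∀ x : R, act (l * m) x = act l (act m x)) ∧
    (∀ l : G, ∀ x y : R, act l (x * y) = act l x * y) ∧
    ∃ f : R → R → G, ∀ a b : R, a * b = act (f a b) (b * a)

/-- The order of `g`: least `n ≥ 1` with `gⁿ = 1`, and `0` if no such `n` exists. -/
noncomputable def ordOf {S : Type*} [Monoid S] (g : S) : ℕ := sInf {n | 1 ≤ n ∧ g ^ n = 1}

/-!
Write `a = ∑ b_g` with `b_g ∈ R_g`, so `a ^ N` is a sum of products `b_{g₁} ⋯ b_{g_N}`. For such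
a word, if some prefix product `g₁ ⋯ g_i` has `R_{g₁ ⋯ g_i} = 0` the product vanishes. Otherwise
the `N` prefix products take at most `d` values, so one value recurs at `N / d` positions, and by
left cancellation the chunks of the word between consecutive recurrences multiply to `e`: their
products lie in `R_e`. Few chunks are long, and there are few short words, so some short word
occurs as a chunk `s` times. Its value `c` satisfies `c ^ s = 0`, and f-commutativity moves the
`s` copies of `c` together at the cost of twisting by the action, which preserves `0`.
-/

section ListProd

variable {R : Type*}

theorem mulList_cons [Mul R] (a x : R) (l : List R) : mulList a (x :: l) = mulList (a * x) l :=
  rfl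

theorem mulList_append [Mul R] (a : R) (l₁ l₂ : List R) :
    mulList a (l₁ ++ l₂) = mulList (mulList a l₁) l₂ :=
  List.foldl_append

theorem mul_mulList [Semigroup R] (a b : R) (l : List R) : a * mulList b l = mulList (a * b) l := by
  induction l generalizing b with
  | nil => rfl
  | cons x l ih => rw [mulList_cons, mulList_cons, ih, mul_assoc]

theorem sum_mulList [NonUnitalNonAssocSemiring R] {ι : Type*} (F : Finset ι) (y : ι → R)
    (l : List R) : mulList (∑ i ∈ F, y i) l = ∑ i ∈ F, mulList (y i) l := by
  induction l generalizing y with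
  | nil => rfl
  | cons x l ih => simp only [mulList_cons, Finset.sum_mul, ih]

/-- Product of a list, with junk value `0` on `[]`. -/
def listProd [Mul R] [Zero R] : List R → R
  | [] => 0
  | x :: l => mulList x l

theorem listProd_cons [Semigroup R] [Zero R] (x : R) {l : List R} (hl : l ≠ []) :
    listProd (x :: l) = x * listProd l := by
  obtain ⟨y, l, rfl⟩ := List.exists_cons_of_ne_nil hl
  exact (mul_mulList x y l).symm

theorem listProd_append [Semigroup R] [Zero R] {l₁ l₂ : List R} (h₁ : l₁ ≠ []) (h₂ : l₂ ≠ []) :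
    listProd (l₁ ++ l₂) = listProd l₁ * listProd l₂ := by
  obtain ⟨x, l₁, rfl⟩ := List.exists_cons_of_ne_nil h₁
  obtain ⟨y, l₂, rfl⟩ := List.exists_cons_of_ne_nil h₂
  exact (mulList_append x l₁ (y :: l₂)).trans (mul_mulList _ y l₂).symm

theorem listProd_eq_zero_of_isInfix [SemigroupWithZero R] {l₀ l : List R} (h : l₀ <:+: l)
    (hne : l₀ ≠ []) (h₀ : listProd l₀ = 0) : listProd l = 0 := by
  obtain ⟨u, v, rfl⟩ := h
  have hv : listProd (l₀ ++ v) = 0 := by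
    rcases eq_or_ne v [] with rfl | hv
    · simpa using h₀
    · rw [listProd_append hne hv, h₀, zero_mul]
  rcases eq_or_ne u [] with rfl | hu
  · simpa using hv
  · rw [List.append_assoc, listProd_append hu (by simp [hne]), hv, mul_zero]

theorem listProd_flatten [Semigroup R] [Zero R] {L : List (List R)} (hL : ∀ l ∈ L, l ≠ []) :
    listProd L.flatten = listProd (L.map listProd) := by
  induction L with
  | nil => rfl
  | cons l L ih =>
    rcases eq_or_ne L [] with rfl | hne
    · simp only [List.flatten_cons, List.flatten_nil, List.append_nil, List.map_cons,
        List.map_nil]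
      rfl
    have hflat : L.flatten ≠ [] := by
      obtain ⟨l', hl'⟩ := List.exists_mem_of_ne_nil L hne
      simpa using ⟨l', hl', hL l' (List.mem_cons_of_mem l hl')⟩
    rw [List.flatten_cons, List.map_cons, listProd_append (hL l (by simp)) hflat,
      ih fun l' hl' => hL l' (List.mem_cons_of_mem l hl'), listProd_cons _ (by simpa using hne)]

theorem listProd_replicate [Mul R] [Zero R] (a : R) : ∀ n, listProd (List.replicate n a) = pw a n
  | 0 => rfl
  | 1 => rfl
  | n + 2 => by
    rw [List.replicate_succ']
    show mulList a (List.replicate n a ++ [a]) = pw a (n + 1) * a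
    rw [mulList_append, ← listProd_replicate a (n + 1)]
    rfl

end ListProd

section Expansion

variable {R : Type*}

theorem mulList_replicate_sum_eq_zero [NonUnitalSemiring R] {ι : Type*} (F : Finset ι)
    (x : ι → R) (y : R) (n : ℕ)
    (h : ∀ w : List ι, w.length = n → (∀ i ∈ w, i ∈ F) → mulList y (w.map x) = 0) :
    mulList y (List.replicate n (∑ i ∈ F, x i)) = 0 := by
  induction n generalizing y with
  | zero => exact h [] rfl (by simp)
  | succ n ih =>
    rw [List.replicate_succ, mulList_cons, Finset.mul_sum, sum_mulList]
    refine Finset.sum_eq_zero fun i hi => ih _ fun w hw hwF => ?_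
    exact h (i :: w) (by simp [hw]) (by simpa [hi] using hwF)

theorem pw_sum_eq_zero [NonUnitalSemiring R] {ι : Type*} (F : Finset ι) (x : ι → R) (n : ℕ)
    (h : ∀ w : List ι, w.length = n → (∀ i ∈ w, i ∈ F) → listProd (w.map x) = 0) :
    pw (∑ i ∈ F, x i) n = 0 := by
  cases n with
  | zero => rfl
  | succ n =>
    rw [← listProd_replicate, List.replicate_succ]
    refine (sum_mulList F x _).trans (Finset.sum_eq_zero fun i hi => ?_)
    refine mulList_replicate_sum_eq_zero F x (x i) n fun w hw hwF => ?_
    exact h (i :: w) (by simp [hw]) (by simpa [hi] using hwF)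

end Expansion

section FCommutative

variable {R G : Type*} {T : Set R} {act : G → R → R}

theorem listProd_mem [SemigroupWithZero R] (hT₀ : (0 : R) ∈ T) (hT : ∀ x ∈ T, ∀ y ∈ T, x * y ∈ T)
    {l : List R} (hl : ∀ x ∈ l, x ∈ T) : listProd l ∈ T := by
  induction l with
  | nil => exact hT₀
  | cons x l ih =>
    rcases eq_or_ne l [] with rfl | hne
    · exact hl x (by simp)
    rw [listProd_cons x hne]
    exact hT x (hl x (by simp)) _ (ih fun y hy => hl y (List.mem_cons_of_mem x hy))

/-- The relation that f-commutativity produces between a product and its rearrangements. -/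
def Twisted (act : G → R → R) (x y : R) : Prop :=
  x = y ∨ ∃ g, x = act g y

theorem Twisted.trans [Semigroup G]
    (h₁ : ∀ l m : G, ∀ x : R, x ∈ T → act (l * m) x = act l (act m x))
    {x y z : R} (hxy : Twisted act x y) (hyz : Twisted act y z) (hz : z ∈ T) :
    Twisted act x z := by
  rcases hxy with rfl | ⟨g, rfl⟩ <;> rcases hyz with rfl | ⟨g', rfl⟩
  · exact Or.inl rfl
  · exact Or.inr ⟨g', rfl⟩
  · exact Or.inr ⟨g, rfl⟩
  · exact Or.inr ⟨g * g', (h₁ g g' z hz).symm⟩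

theorem Twisted.mul_right [Mul R]
    (h₃ : ∀ l : G, ∀ x y : R, x ∈ T → y ∈ T → act l (x * y) = act l x * y)
    {x y z : R} (h : Twisted act x y) (hy : y ∈ T) (hz : z ∈ T) :
    Twisted act (x * z) (y * z) := by
  rcases h with rfl | ⟨g, rfl⟩
  · exact Or.inl rfl
  · exact Or.inr ⟨g, (h₃ g y z hy hz).symm⟩

theorem Twisted.mul_left [Mul R] [Semigroup G] (hT : ∀ x ∈ T, ∀ y ∈ T, x * y ∈ T)
    (h₁ : ∀ l m : G, ∀ x : R, x ∈ T → act (l * m) x = act l (act m x))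
    (h₂ : ∀ l : G, ∀ x : R, x ∈ T → act l x ∈ T)
    (h₃ : ∀ l : G, ∀ x y : R, x ∈ T → y ∈ T → act l (x * y) = act l x * y)
    {f : R → R → G} (hf : ∀ a b : R, a ∈ T → b ∈ T → a * b = act (f a b) (b * a))
    {x y z : R} (h : Twisted act x y) (hy : y ∈ T) (hz : z ∈ T) :
    Twisted act (z * x) (z * y) := by
  rcases h with rfl | ⟨g, rfl⟩
  · exact Or.inl rfl
  refine Or.inr ⟨f z (act g y) * g * f y z, ?_⟩
  calc z * act g y = act (f z (act g y)) (act g (y * z)) := by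
        rw [hf z _ hz (h₂ g y hy), h₃ g y z hy hz]
    _ = act (f z (act g y) * g) (act (f y z) (z * y)) := by
        rw [← h₁ _ _ _ (hT y hy z hz), hf y z hy hz]
    _ = act (f z (act g y) * g * f y z) (z * y) := (h₁ _ _ _ (hT z hz y hy)).symm

theorem Twisted.eq_zero [MulZeroClass R] (hT₀ : (0 : R) ∈ T)
    (h₃ : ∀ l : G, ∀ x y : R, x ∈ T → y ∈ T → act l (x * y) = act l x * y)
    {x : R} (h : Twisted act x 0) : x = 0 := by
  rcases h with rfl | ⟨g, rfl⟩
  · rfl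
  · simpa using h₃ g 0 0 hT₀ hT₀

theorem twisted_listProd_of_perm [SemigroupWithZero R] [Semigroup G] (hT₀ : (0 : R) ∈ T)
    (hT : ∀ x ∈ T, ∀ y ∈ T, x * y ∈ T)
    (h₁ : ∀ l m : G, ∀ x : R, x ∈ T → act (l * m) x = act l (act m x))
    (h₂ : ∀ l : G, ∀ x : R, x ∈ T → act l x ∈ T)
    (h₃ : ∀ l : G, ∀ x y : R, x ∈ T → y ∈ T → act l (x * y) = act l x * y)
    {f : R → R → G} (hf : ∀ a b : R, a ∈ T → b ∈ T → a * b = act (f a b) (b * a))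
    {l l' : List R} (hp : l.Perm l') (hl : ∀ x ∈ l, x ∈ T) :
    Twisted act (listProd l) (listProd l') := by
  induction hp with
  | nil => exact Or.inl rfl
  | @cons x l₁ l₂ hp ih =>
    rcases eq_or_ne l₁ [] with rfl | hne
    · rw [← hp.nil_eq]
      exact Or.inl rfl
    have hl₁ : ∀ y ∈ l₁, y ∈ T := fun y hy => hl y (List.mem_cons_of_mem x hy)
    rw [listProd_cons x hne, listProd_cons x fun h => hne (List.Perm.eq_nil (h ▸ hp))]
    exact (ih hl₁).mul_left hT h₁ h₂ h₃ hf
      (listProd_mem hT₀ hT fun y hy => hl₁ y (hp.mem_iff.mpr hy)) (hl x (by simp))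
  | swap x y l =>
    have hx : x ∈ T := hl x (by simp)
    have hy : y ∈ T := hl y (by simp)
    rcases eq_or_ne l [] with rfl | hne
    · exact Or.inr ⟨f y x, hf y x hy hx⟩
    rw [listProd_cons _ (by simp), listProd_cons _ hne, listProd_cons _ (by simp),
      listProd_cons _ hne, ← mul_assoc, ← mul_assoc]
    exact Twisted.mul_right h₃ (Or.inr ⟨f y x, hf y x hy hx⟩) (hT x hx y hy)
      (listProd_mem hT₀ hT fun z hz => hl z (by simp [hz]))
  | trans hp₁₂ hp₂₃ ih₁₂ ih₂₃ =>
    have hl₂ : ∀ y ∈ _, y ∈ T := fun y hy => hl y (hp₁₂.mem_iff.mpr hy)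
    exact (ih₁₂ hl).trans h₁ (ih₂₃ hl₂)
      (listProd_mem hT₀ hT fun y hy => hl₂ y (hp₂₃.mem_iff.mpr hy))

theorem listProd_eq_zero_of_replicate_sublist [SemigroupWithZero R] (hfc : IsFCommutativeOn T)
    (hT₀ : (0 : R) ∈ T) (hT : ∀ x ∈ T, ∀ y ∈ T, x * y ∈ T) {l : List R} (hl : ∀ x ∈ l, x ∈ T)
    {c : R} {s : ℕ} (hs : 1 ≤ s) (hc : pw c s = 0) (hcl : (List.replicate s c).Sublist l) :
    listProd l = 0 := by
  obtain ⟨G, _, act, h₁, h₂, h₃, f, hf⟩ := hfc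
  obtain ⟨rest, hperm⟩ := hcl.exists_perm_append
  refine Twisted.eq_zero hT₀ h₃ ((twisted_listProd_of_perm hT₀ hT h₁ h₂ h₃ hf hperm hl).trans h₁
    (Or.inl ?_) hT₀)
  refine listProd_eq_zero_of_isInfix (List.prefix_append _ rest).isInfix (by simp; omega) ?_
  rw [listProd_replicate, hc]

end FCommutative

section Words

variable {α : Type*}

theorem exists_replicate_sublist_of_card_mul_lt_length {t : Finset α} {l : List α} {k : ℕ}
    (hl : ∀ x ∈ l, x ∈ t) (h : t.card * k < l.length) :
    ∃ x, (List.replicate (k + 1) x).Sublist l := by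
  classical
  by_contra! hno
  have hcount : ∀ x, l.count x ≤ k := fun x =>
    Nat.le_of_lt_succ (not_le.mp fun hx => hno x (List.replicate_sublist_iff.mpr hx))
  have : l.length ≤ t.card * k :=
    calc l.length = ∑ x ∈ t, (l : Multiset α).count x :=
          (Multiset.sum_count_eq_card fun x hx => hl x (Multiset.mem_coe.mp hx)).symm
      _ ≤ ∑ _x ∈ t, k := Finset.sum_le_sum fun x _ => by simpa using hcount x
      _ = t.card * k := by simp
  omega

def wordsBelow [DecidableEq α] (F : Finset α) : ℕ → Finset (List α)
  | 0 => ∅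
  | L + 1 => insert [] ((F ×ˢ wordsBelow F L).image fun p => p.1 :: p.2)

theorem mem_wordsBelow [DecidableEq α] {F : Finset α} :
    ∀ {L : ℕ} {w : List α}, w.length < L → (∀ x ∈ w, x ∈ F) → w ∈ wordsBelow F L
  | L + 1, [], _, _ => Finset.mem_insert_self _ _
  | L + 1, x :: w, hw, hF => Finset.mem_insert_of_mem <| Finset.mem_image.mpr
      ⟨(x, w), Finset.mem_product.mpr ⟨hF x (by simp),
        mem_wordsBelow (by simpa using hw) fun y hy => hF y (by simp [hy])⟩, rfl⟩

theorem card_wordsBelow_le [DecidableEq α] (F : Finset α) :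
    ∀ L, (wordsBelow F L).card ≤ ∑ i ∈ Finset.range L, F.card ^ i
  | 0 => by simp [wordsBelow]
  | L + 1 =>
    calc (wordsBelow F (L + 1)).card ≤ F.card * (wordsBelow F L).card + 1 := by
          refine (Finset.card_insert_le _ _).trans (Nat.add_le_add_right ?_ 1)
          exact Finset.card_image_le.trans (Finset.card_product _ _).le
      _ ≤ F.card * ∑ i ∈ Finset.range L, F.card ^ i + 1 := by
          gcongr; exact card_wordsBelow_le F L
      _ = ∑ i ∈ Finset.range (L + 1), F.card ^ i := by
          rw [Finset.sum_range_succ', Finset.mul_sum]; simp [pow_succ']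

theorem length_filter_le_mul_le_sum (L : ℕ) (cs : List (List α)) :
    L * (cs.filter fun c => !decide (c.length < L)).length ≤ (cs.map List.length).sum := by
  induction cs with
  | nil => simp
  | cons c cs ih =>
    by_cases hc : c.length < L
    · simp [hc]; omega
    · simp [hc, Nat.mul_succ]; omega

/-- Words of length `≥ L` are few, and so are the distinct words of length `< L`. -/
theorem exists_replicate_sublist_of_sum_length_lt {F : Finset α} {cs : List (List α)} {L k : ℕ}
    (hF : ∀ c ∈ cs, ∀ x ∈ c, x ∈ F)
    (h : (cs.map List.length).sum + L * (∑ i ∈ Finset.range L, F.card ^ i) * k < L * cs.length) :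
    ∃ c, (List.replicate (k + 1) c).Sublist cs := by
  classical
  have hsplit := List.length_eq_length_filter_add (l := cs) fun c => decide (c.length < L)
  have hlong := length_filter_le_mul_le_sum L cs
  have hshort : (wordsBelow F L).card * k < (cs.filter fun c => decide (c.length < L)).length := by
    have hwords := Nat.mul_le_mul_left (L * k) (card_wordsBelow_le F L)
    by_contra! hle
    nlinarith [Nat.mul_le_mul_left L hle]
  obtain ⟨c, hc⟩ := exists_replicate_sublist_of_card_mul_lt_length (t := wordsBelow F L)
    (fun c hc => by
      obtain ⟨hc, hlen⟩ := List.mem_filter.mp hc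
      exact mem_wordsBelow (by simpa using hlen) (hF c hc)) hshort
  exact ⟨c, hc.trans List.filter_sublist⟩

end Words

section Chunks

variable {S : Type*} [Monoid S] [IsLeftCancelMul S]

theorem exists_chunks_of_prod_take_eq (W : List S) (O : Finset ℕ) (j : ℕ)
    (hO : ∀ i ∈ O, j < i ∧ i ≤ W.length ∧ (W.take i).prod = (W.take j).prod) :
    ∃ cs : List (List S), cs.length = O.card ∧ cs.flatten <+: W.drop j ∧
      ∀ c ∈ cs, c ≠ [] ∧ c.prod = 1 := by
  induction O using Finset.induction_on_min generalizing j with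
  | empty => exact ⟨[], rfl, List.nil_prefix, by simp⟩
  | insert a O ha ih =>
    obtain ⟨hja, haW, hpa⟩ := hO a (Finset.mem_insert_self a O)
    obtain ⟨cs, hcard, hpre, hcs⟩ := ih a fun i hi =>
      let ⟨_, hiW, hpi⟩ := hO i (Finset.mem_insert_of_mem hi)
      ⟨ha i hi, hiW, hpi.trans hpa.symm⟩
    have hsplit : W.drop j = (W.drop j).take (a - j) ++ W.drop a := by
      conv_lhs => rw [← List.take_append_drop (a - j) (W.drop j)]
      rw [List.drop_drop, Nat.add_sub_cancel' hja.le]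
    have htake : W.take a = W.take j ++ (W.drop j).take (a - j) := by
      rw [← List.take_add, Nat.add_sub_cancel' hja.le]
    set c₀ := (W.drop j).take (a - j) with hc₀
    refine ⟨c₀ :: cs, ?_, ?_, ?_⟩
    · rw [Finset.card_insert_of_notMem fun h => lt_irrefl a (ha a h), List.length_cons, hcard]
    · rw [List.flatten_cons, hsplit]
      exact (List.prefix_append_right_inj _).mpr hpre
    · intro c hc
      rcases List.mem_cons.mp hc with rfl | hc
      · refine ⟨?_, mul_left_cancel (a := (W.take j).prod) ?_⟩
        · rw [← List.length_pos_iff, hc₀, List.length_take, List.length_drop]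
          omega
        · rw [mul_one, ← List.prod_append, ← htake, hpa]
      · exact hcs c hc

/-- By pigeonhole some prefix product recurs at `m` positions; the chunks between consecutive
recurrences have product `1`. -/
theorem exists_chunks (W : List S) (P : Finset S)
    (hP : ∀ i ∈ Finset.Icc 1 W.length, (W.take i).prod ∈ P) (hPne : P.Nonempty) {m : ℕ}
    (hm : P.card * m ≤ W.length) :
    ∃ cs : List (List S), m ≤ cs.length + 1 ∧ cs.flatten <:+: W ∧
      ∀ c ∈ cs, c ≠ [] ∧ c.prod = 1 := by
  classical
  obtain ⟨v, -, hv⟩ := Finset.exists_le_card_fiber_of_mul_le_card_of_maps_to hP hPne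
    (by simpa using hm)
  set O := (Finset.Icc 1 W.length).filter fun i => (W.take i).prod = v
  rcases O.eq_empty_or_nonempty with hO | hO
  · exact ⟨[], by simp_all, by simp, by simp⟩
  have hOmem : ∀ i ∈ O, i ≤ W.length ∧ (W.take i).prod = v := fun i hi => by
    simp only [O, Finset.mem_filter, Finset.mem_Icc] at hi
    exact ⟨hi.1.2, hi.2⟩
  obtain ⟨cs, hcard, hpre, hcs⟩ := exists_chunks_of_prod_take_eq W (O.erase (O.min' hO))
    (O.min' hO) fun i hi => by
      obtain ⟨hne, hiO⟩ := Finset.mem_erase.mp hi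
      exact ⟨lt_of_le_of_ne (O.min'_le i hiO) hne.symm, (hOmem i hiO).1,
        (hOmem i hiO).2.trans (hOmem _ (O.min'_mem hO)).2.symm⟩
  refine ⟨cs, ?_, hpre.isInfix.trans (List.drop_suffix _ W).isInfix, hcs⟩
  rw [hcard, Finset.card_erase_of_mem (O.min'_mem hO)]
  omega

end Chunks

section Grading

variable {S R : Type*} [Monoid S] [NonUnitalRing R] {A : S → AddSubgroup R}

theorem listProd_map_mem (hmul : ∀ {g h : S} {x y : R}, x ∈ A g → y ∈ A h → x * y ∈ A (g * h))
    {b : S → R} (hb : ∀ g, b g ∈ A g) (w : List S) : listProd (w.map b) ∈ A w.prod := by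
  induction w with
  | nil => exact zero_mem _
  | cons g w ih =>
    rcases eq_or_ne w [] with rfl | hne
    · simpa [listProd, mulList] using hb g
    rw [List.map_cons, listProd_cons _ (by simpa using hne), List.prod_cons]
    exact hmul (hb g) ih

theorem listProd_map_eq_zero_of_replicate_sublist
    (hmul : ∀ {g h : S} {x y : R}, x ∈ A g → y ∈ A h → x * y ∈ A (g * h))
    (hfc : IsFCommutativeOn (A 1 : Set R)) {s : ℕ} (hs : 1 ≤ s) (hnil : ∀ a ∈ A 1, pw a s = 0)
    {b : S → R} (hb : ∀ g, b g ∈ A g) {W : List S} {cs : List (List S)} (hW : cs.flatten <:+: W)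
    (hcs : ∀ c ∈ cs, c ≠ [] ∧ c.prod = 1) {c : List S} (hc : (List.replicate s c).Sublist cs) :
    listProd (W.map b) = 0 := by
  have hval : ∀ c ∈ cs, listProd (c.map b) ∈ A 1 := fun c hc =>
    (hcs c hc).2 ▸ listProd_map_mem hmul hb c
  have hc_mem : c ∈ cs := hc.subset (List.mem_replicate.mpr ⟨by omega, rfl⟩)
  refine listProd_eq_zero_of_isInfix (hW.map b) ?_ ?_
  · simpa using ⟨c, hc_mem, (hcs c hc_mem).1⟩
  rw [List.map_flatten, listProd_flatten (by simpa using fun c hc => (hcs c hc).1), List.map_map]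
  refine listProd_eq_zero_of_replicate_sublist hfc (zero_mem _)
    (fun x hx y hy => by simpa using hmul hx hy) (by simpa using hval) hs
    (hnil _ (hval c hc_mem)) ?_
  simpa [Function.comp_def] using hc.map (fun c => listProd (c.map b))

theorem listProd_map_eq_zero [IsLeftCancelMul S]
    (hmul : ∀ {g h : S} {x y : R}, x ∈ A g → y ∈ A h → x * y ∈ A (g * h))
    (P : Finset S) (hP : ∀ g, A g ≠ ⊥ → g ∈ P) (hPne : P.Nonempty)
    (hfc : IsFCommutativeOn (A 1 : Set R)) {s : ℕ} (hs : 1 ≤ s) (hnil : ∀ a ∈ A 1, pw a s = 0)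
    {b : S → R} (hb : ∀ g, b g ∈ A g) {W : List S} (hWP : ∀ g ∈ W, g ∈ P)
    (hW : W.length = 2 * s * P.card ^ 2 * ∑ i ∈ Finset.range (2 * P.card), P.card ^ i) :
    listProd (W.map b) = 0 := by
  set d := P.card
  set V := ∑ i ∈ Finset.range (2 * d), d ^ i
  by_cases hzero : ∃ i ∈ Finset.Icc 1 W.length, A (W.take i).prod = ⊥
  · obtain ⟨i, hi, hbot⟩ := hzero
    rw [Finset.mem_Icc] at hi
    refine listProd_eq_zero_of_isInfix ((List.take_prefix i W).map b).isInfix ?_ ?_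
    · rw [← List.length_pos_iff, List.length_map, List.length_take]
      omega
    · simpa [hbot] using listProd_map_mem hmul hb (W.take i)
  push Not at hzero
  obtain ⟨cs, hlen, hinf, hcs⟩ := exists_chunks W P (fun i hi => hP _ (hzero i hi)) hPne
    (m := 2 * s * d * V) (show d * (2 * s * d * V) = W.length by rw [hW]; ring).le
  have hsum : (cs.map List.length).sum ≤ 2 * s * d ^ 2 * V := by
    simpa [hW] using hinf.length_le
  have hd : 1 ≤ d := Finset.card_pos.mpr hPne
  have hV : 2 * d ≤ V := by
    simpa using Finset.sum_le_sum fun i (_ : i ∈ Finset.range (2 * d)) => Nat.one_le_pow i d hd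
  have hcount : (cs.map List.length).sum + 2 * d * V * (s - 1) < 2 * d * cs.length := by
    obtain ⟨k, rfl⟩ : ∃ k, s = k + 1 := ⟨s - 1, by omega⟩
    rw [Nat.add_sub_cancel]
    nlinarith [Nat.mul_le_mul_left (2 * d) hlen, Nat.mul_le_mul_left (d * V * k) hd]
  obtain ⟨c, hc⟩ := exists_replicate_sublist_of_sum_length_lt (F := P) (L := 2 * d) (k := s - 1)
    (fun c hc x hx => hWP x (hinf.subset (List.mem_flatten.mpr ⟨c, hc, hx⟩))) hcount
  rw [Nat.sub_add_cancel hs] at hc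
  exact listProd_map_eq_zero_of_replicate_sublist hmul hfc hs hnil hb hinf hcs hc

end Grading

theorem stmt_7 {S R : Type*} [Monoid S] [IsLeftCancelMul S] [DecidableEq S]
    [NonUnitalRing R] (A : S → AddSubgroup R) (hA : IsGrading A)
    (d s : ℕ) (hfin : {g : S | A g ≠ ⊥}.Finite) (hcard : hfin.toFinset.card = d)
    (hd : 1 < d) (hs : 1 ≤ s)
    (hfc : IsFCommutativeOn (A 1 : Set R)) (hnil : ∀ a ∈ A 1, pw a s = 0) :
    ∀ a : R, pw a (2 * s * d ^ 2 * ((d ^ (2 * d) - 1) / (d - 1))) = 0 := by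
  classical
  intro a
  let _ := hA.isInternal.chooseDecomposition
  have hP : ∀ g, A g ≠ ⊥ → g ∈ hfin.toFinset := fun g hg => hfin.mem_toFinset.mpr hg
  rw [← Nat.geomSum_eq hd, ← hcard, ← DirectSum.sum_support_decompose A a]
  refine pw_sum_eq_zero _ _ _ fun w hw hwF => listProd_map_eq_zero hA.mul_mem _ hP
    (Finset.card_pos.mp (by omega)) hfc hs hnil (fun g => (DirectSum.decompose A a g).2)
    (fun g hg => hP g fun hbot => ?_) hw
  have := DFinsupp.mem_support_iff.mp (hwF g hg)
  exact this (Subtype.ext (by simpa [hbot] using (DirectSum.decompose A a g).2))
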